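/- Let G = (V,E) be a finite graph with covered components polynomial C(G) = C(G,x,y,z). Then the number of vertices n(G) equals the degree of C(G) in the variable x, the number of edges m(G) equals the degree of C(G) in the variable y, and the number of connected components k(G) equals the degree in x of the coefficient of y^{m(G)} in C(G). -/

import Mathlib

open MvPolynomial Finset
open scoped Classical

noncomputable section

variable {V : Type}

/-- The (finite) edge set of a simple graph on a finite vertex type, as a `Finset`. -/
def edgeFinset' [Fintype V] (G : SimpleGraph V) : Finset (Sym2 V) :=
  (Set.toFinite G.edgeSet).toFinset

/-- `k(G)`: the number of connected components of `G`. -/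
def kG (G : SimpleGraph V) : ℕ := Nat.card G.ConnectedComponent

/-- `c(G)`: the number of covered components of `G`, i.e. connected components
containing at least one edge. -/
def cG (G : SimpleGraph V) : ℕ :=
  Nat.card {c : G.ConnectedComponent // ∃ v w, G.Adj v w ∧ G.connectedComponentMk v = c}

/-- The covered components polynomial
`C(G,x,y,z) = ∑_{A ⊆ E} x^{k(⟨A⟩)} y^{|A|} z^{c(⟨A⟩)}` of a finite simple graph, where
`⟨A⟩` denotes the spanning subgraph with edge set `A`, and `x = X 0`, `y = X 1`,
`z = X 2`. -/
def ccp [Fintype V] (G : SimpleGraph V) : MvPolynomial (Fin 3) ℤ :=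
  ∑ A ∈ (edgeFinset' G).powerset,
    X 0 ^ kG (SimpleGraph.fromEdgeSet (A : Set (Sym2 V))) * X 1 ^ A.card *
      X 2 ^ cG (SimpleGraph.fromEdgeSet (A : Set (Sym2 V)))

/-- `[x^i y^j z^k] P`: the coefficient of the monomial `x^i y^j z^k`. -/
def coeff3 (P : MvPolynomial (Fin 3) ℤ) (i j k : ℕ) : ℤ :=
  MvPolynomial.coeff (Finsupp.single 0 i + Finsupp.single 1 j + Finsupp.single 2 k) P

/-- `deg_x [y^m] P`: the degree in `x` of the coefficient of `y^m` in `P`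
(a polynomial in `x` and `z`). -/
def degXcoeffY (P : MvPolynomial (Fin 3) ℤ) (m : ℕ) : ℕ :=
  (P.support.filter (fun μ => μ 1 = m)).sup (fun μ => μ 0)


/-! The coefficients of `C(G)` count subsets `A ⊆ E`, so its support is exactly the set of
exponents `(k(⟨A⟩), |A|, c(⟨A⟩))` and each degree is a maximum over `A ⊆ E`: `k(⟨A⟩) ≤ n` with
equality at `A = ∅`, `|A| ≤ m`, and `|A| = m` only for `A = E`, where `k(⟨E⟩) = k(G)`. -/

namespace MvPolynomial

variable {σ R ι : Type*} [CommSemiring R] [CharZero R]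

theorem support_sum_monomial_one [DecidableEq σ] (s : Finset ι) (f : ι → σ →₀ ℕ) :
    (∑ i ∈ s, monomial (f i) (1 : R)).support = s.image f := by
  ext μ
  have hcoeff : coeff μ (∑ i ∈ s, monomial (f i) (1 : R)) = #(s.filter (f · = μ)) := by
    simp only [coeff_sum, coeff_monomial, Finset.sum_boole]
  simp only [mem_support_iff, hcoeff, Nat.cast_ne_zero, Finset.card_ne_zero,
    Finset.filter_nonempty_iff, Finset.mem_image]

theorem degreeOf_sum_monomial_one (s : Finset ι) (f : ι → σ →₀ ℕ) (n : σ) :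
    degreeOf n (∑ i ∈ s, monomial (f i) (1 : R)) = s.sup (f · n) := by
  rw [degreeOf_eq_sup, support_sum_monomial_one, Finset.sup_image]
  rfl

end MvPolynomial

namespace SimpleGraph

theorem kG_le_card [Fintype V] (H : SimpleGraph V) : kG H ≤ Fintype.card V := by
  rw [kG, ← Nat.card_eq_fintype_card]
  exact Nat.card_le_card_of_surjective H.connectedComponentMk
    fun c => c.exists_rep.imp fun _ h => h

theorem kG_bot [Fintype V] : kG (⊥ : SimpleGraph V) = Fintype.card V := by
  rw [kG, ← Nat.card_eq_fintype_card]
  refine (Nat.card_eq_of_bijective (⊥ : SimpleGraph V).connectedComponentMk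
    ⟨fun a b h => ?_, fun c => c.exists_rep.imp fun _ h => h⟩).symm
  exact reachable_bot.mp (ConnectedComponent.eq.mp h)

theorem fromEdgeSet_edgeFinset' [Fintype V] (G : SimpleGraph V) :
    fromEdgeSet (edgeFinset' G : Set (Sym2 V)) = G := by
  rw [edgeFinset', Set.Finite.coe_toFinset, fromEdgeSet_edgeSet]

end SimpleGraph

open SimpleGraph

def ccpExponent (A : Finset (Sym2 V)) : Fin 3 →₀ ℕ :=
  Finsupp.single 0 (kG (fromEdgeSet (A : Set (Sym2 V)))) + Finsupp.single 1 #A +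
    Finsupp.single 2 (cG (fromEdgeSet (A : Set (Sym2 V))))

@[simp]
theorem ccpExponent_zero (A : Finset (Sym2 V)) :
    ccpExponent A 0 = kG (fromEdgeSet (A : Set (Sym2 V))) := by
  simp [ccpExponent]

@[simp]
theorem ccpExponent_one (A : Finset (Sym2 V)) : ccpExponent A 1 = #A := by
  simp [ccpExponent]

theorem ccp_eq_sum_monomial [Fintype V] (G : SimpleGraph V) :
    ccp G = ∑ A ∈ (edgeFinset' G).powerset, monomial (ccpExponent A) 1 := by
  refine Finset.sum_congr rfl fun A _ => ?_
  simp only [ccpExponent, X_pow_eq_monomial, monomial_mul, mul_one]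

theorem support_ccp [Fintype V] (G : SimpleGraph V) :
    (ccp G).support = (edgeFinset' G).powerset.image ccpExponent := by
  rw [ccp_eq_sum_monomial, support_sum_monomial_one]

theorem degreeOf_zero_ccp [Fintype V] (G : SimpleGraph V) :
    degreeOf 0 (ccp G) = Fintype.card V := by
  rw [ccp_eq_sum_monomial, degreeOf_sum_monomial_one]
  refine le_antisymm (Finset.sup_le fun A _ => ?_) ?_
  · simpa using kG_le_card _
  · simpa [kG_bot] using
      Finset.le_sup (f := (ccpExponent · 0)) (Finset.empty_mem_powerset (edgeFinset' G))

theorem degreeOf_one_ccp [Fintype V] (G : SimpleGraph V) :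
    degreeOf 1 (ccp G) = #(edgeFinset' G) := by
  rw [ccp_eq_sum_monomial, degreeOf_sum_monomial_one]
  refine le_antisymm (Finset.sup_le fun A hA => ?_) ?_
  · simpa using Finset.card_le_card (Finset.mem_powerset.mp hA)
  · simpa using Finset.le_sup (f := (ccpExponent · 1)) (Finset.mem_powerset_self (edgeFinset' G))

theorem degXcoeffY_ccp_card_edgeFinset' [Fintype V] (G : SimpleGraph V) :
    degXcoeffY (ccp G) #(edgeFinset' G) = kG G := by
  have htop : (edgeFinset' G).powerset.filter (#· = #(edgeFinset' G)) = {edgeFinset' G} := by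
    rw [← Finset.powersetCard_eq_filter, Finset.powersetCard_self]
  simp only [degXcoeffY, support_ccp, Finset.filter_image, ccpExponent_one,
    htop, Finset.image_singleton, Finset.sup_singleton, ccpExponent_zero, fromEdgeSet_edgeFinset']

/-- For a finite graph `G`, the number of vertices `n(G)` is the degree
of `C(G)` in `x`, the number of edges `m(G)` is the degree of `C(G)` in `y`, and the
number of connected components `k(G)` is the degree in `x` of the coefficient of
`y^{m(G)}` in `C(G)`. -/
theorem ccp_vertices_edges_components {V : Type} [Fintype V] (G : SimpleGraph V) :
    Fintype.card V = MvPolynomial.degreeOf 0 (ccp G) ∧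
    (edgeFinset' G).card = MvPolynomial.degreeOf 1 (ccp G) ∧
    kG G = degXcoeffY (ccp G) (edgeFinset' G).card :=
  ⟨(degreeOf_zero_ccp G).symm, (degreeOf_one_ccp G).symm,
    (degXcoeffY_ccp_card_edgeFinset' G).symm⟩

end
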